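/- For a path y weakly controlled by a branched rough path X with remainder y^♯, the coboundary of the remainder satisfies δy^♯ = Σ_{τ∈ℱ^{n−1}_ℒ} X^τ · y^{τ,♯}, i.e. (δy^♯)_{tus} = Σ_τ X^τ_{tu} y^{τ,♯}_{us}, using δX^τ = X^{Δ'τ} and the controlled-path relations. -/

import Mathlib

/-- `ℒ`-labeled rooted trees: `node a ts` grafts the trees in `ts`
onto a new root labeled `a`. -/
inductive PTree (L : Type) : Type
  | node : L → List (PTree L) → PTree L

variable {L : Type} [DecidableEq L]

mutual
def deqT : (a b : PTree L) → Decidable (a = b)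
  | .node a ts, .node b us =>
    match decEq a b, deqF ts us with
    | isTrue h0, isTrue h => isTrue (by rw [h0, h])
    | isFalse h0, _ => isFalse (by intro e; injection e; contradiction)
    | _, isFalse h => isFalse (by intro e; injection e; contradiction)
def deqF : (a b : List (PTree L)) → Decidable (a = b)
  | [], [] => isTrue rfl
  | [], _ :: _ => isFalse (by simp)
  | _ :: _, [] => isFalse (by simp)
  | t :: ts, u :: us =>
    match deqT t u, deqF ts us with
    | isTrue h1, isTrue h2 => isTrue (by rw [h1, h2])
    | isFalse h1, _ => isFalse (by intro e; injection e; contradiction)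
    | _, isFalse h2 => isFalse (by intro e; injection e; contradiction)
end

instance : DecidableEq (PTree L) := deqT

mutual
/-- Number of vertices (degree) of a labeled rooted tree. -/
def sizeT : PTree L → ℕ
  | .node _ ts => 1 + sizeF ts
/-- Degree of a forest. -/
def sizeF : List (PTree L) → ℕ
  | [] => 0
  | t :: ts => sizeT t + sizeF ts
end

mutual
/-- The (full) Connes–Kreimer coproduct of a labeled tree, as the list of its
terms `σ⁽¹⁾ ⊗ σ⁽²⁾` (pairs of forests, with multiplicity). -/
def cop : PTree L → List (List (PTree L) × List (PTree L))
  | .node a ts => ([], [PTree.node a ts]) :: (copF ts).map (fun p => ([PTree.node a p.1], p.2))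
/-- The coproduct extended multiplicatively to forests. -/
def copF : List (PTree L) → List (List (PTree L) × List (PTree L))
  | [] => [([], [])]
  | t :: ts => (cop t).flatMap (fun p => (copF ts).map (fun q => (p.1 ++ q.1, p.2 ++ q.2)))
end

/-- Terms of the reduced coproduct `Δ'σ = Δσ − 1⊗σ − σ⊗1` of a forest; the
number of occurrences of `(τ,ρ)` in this list is the counting function `c'(σ,τ,ρ)`. -/
def copRedF (σ : List (PTree L)) : List (List (PTree L) × List (PTree L)) :=
  ((copF σ).erase ([], σ)).erase (σ, [])


section Aux
set_option linter.unusedSectionVars false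

variable {L : Type} [DecidableEq L]

theorem sizeF_append (a b : List (PTree L)) : sizeF (a ++ b) = sizeF a + sizeF b := by
  induction a with
  | nil => simp [sizeF]
  | cons t ts ih => simp [sizeF, ih]; ring

mutual
theorem size_cop : ∀ (t : PTree L), ∀ p ∈ cop t, sizeF p.1 + sizeF p.2 = sizeT t
  | .node a ts => by
    intro p hp
    rw [cop] at hp
    rcases List.mem_cons.1 hp with h | h
    · subst h; simp [sizeF, sizeT]
    · obtain ⟨q, hq, rfl⟩ := List.mem_map.1 h
      have h1 := size_copF ts q hq
      simp only [sizeF, sizeT] at *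
      omega
theorem size_copF : ∀ (ts : List (PTree L)), ∀ p ∈ copF ts, sizeF p.1 + sizeF p.2 = sizeF ts
  | [] => by
    intro p hp
    rw [copF] at hp
    simp at hp; subst hp; simp [sizeF]
  | t :: ts => by
    intro p hp
    rw [copF] at hp
    obtain ⟨q, hq, hp'⟩ := List.mem_flatMap.1 hp
    obtain ⟨r, hr, rfl⟩ := List.mem_map.1 hp'
    have h1 := size_cop t q hq
    have h2 := size_copF ts r hr
    simp only [sizeF, sizeF_append] at *
    omega
end

theorem copF_head : ∀ (ts : List (PTree L)),
    ∃ rest, copF ts = ([], ts) :: rest ∧ ∀ p ∈ rest, p.1 ≠ ([] : List (PTree L))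
  | [] => ⟨[], by rw [copF], by simp⟩
  | t :: ts => by
    obtain ⟨rest, he, hne⟩ := copF_head ts
    obtain ⟨a, us⟩ := t
    refine ⟨rest.map (fun q => (q.1, PTree.node a us :: q.2))
        ++ ((copF us).map (fun p => ([PTree.node a p.1], p.2))).flatMap
            (fun p => (copF ts).map fun q => (p.1 ++ q.1, p.2 ++ q.2)), ?_, ?_⟩
    · rw [copF, cop, List.flatMap_cons, he]
      simp
    · intro p hp
      rcases List.mem_append.1 hp with h | h
      · obtain ⟨q, hq, rfl⟩ := List.mem_map.1 h
        exact hne q hq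
      · obtain ⟨q, hq, hp'⟩ := List.mem_flatMap.1 h
        obtain ⟨r, hr, rfl⟩ := List.mem_map.1 hp'
        obtain ⟨w, hw, rfl⟩ := List.mem_map.1 hq
        simp

theorem swap_sum {α β : Type*} [DecidableEq α] (F : Finset α) (g : α → ℝ) (f : α × β → ℝ)
    (l : List (α × β)) (hl : ∀ p ∈ l, p.1 ∈ F) :
    (∑ τ ∈ F, g τ * (l.map fun p => if p.1 = τ then f p else 0).sum)
      = (l.map fun p => g p.1 * f p).sum := by
  induction l with
  | nil => simp
  | cons p l ih =>
    simp only [List.map_cons, List.sum_cons, mul_add, Finset.sum_add_distrib]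
    rw [ih (fun q hq => hl q (List.mem_cons_of_mem _ hq))]
    congr 1
    simp only [mul_ite, mul_zero]
    rw [Finset.sum_ite_eq F p.1 (fun τ => g τ * f p), if_pos (hl p (List.mem_cons_self (a := p) (l := l)))]

end Aux

/-- For a path `y` weakly controlled by a branched rough path `X`, the coboundary
of the remainder satisfies `δy^♯ = Σ_{τ∈ℱ^{n−1}} X^τ · y^{τ,♯}`, i.e.
`(δy^♯)_{tus} = Σ_τ X^τ_{tu} y^{τ,♯}_{us}`.  Here `F` is the set `ℱ^{n−1}_ℒ` of
nontrivial forests of degree `≤ n−1`, `X` satisfies the tree multiplicative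
property `δX^σ = X^{Δ'σ}` and `(y, y^τ, y^♯, y^{τ,♯})` satisfy the
controlled-path relations. -/
theorem delta_remainder_of_controlled_path
    (n : ℕ) (hn : 1 ≤ n) (F : Finset (List (PTree L)))
    (hF : ∀ f : List (PTree L), f ∈ F ↔ (f ≠ [] ∧ sizeF f ≤ n - 1))
    (X : List (PTree L) → ℝ → ℝ → ℝ)
    (hX : ∀ σ ∈ F, ∀ t u s : ℝ,
      X σ t s - X σ t u - X σ u s
        = ((copRedF σ).map fun p => X p.1 t u * X p.2 u s).sum)
    (y : ℝ → ℝ) (yc : List (PTree L) → ℝ → ℝ)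
    (ysharp : ℝ → ℝ → ℝ) (ycsharp : List (PTree L) → ℝ → ℝ → ℝ)
    (hy : ∀ t s : ℝ, y t - y s = (∑ τ ∈ F, X τ t s * yc τ s) + ysharp t s)
    (hyc : ∀ τ ∈ F, ∀ t s : ℝ,
      yc τ t - yc τ s
        = (∑ σ ∈ F, ((copRedF σ).map fun p =>
            if p.1 = τ then X p.2 t s * yc σ s else 0).sum)
          + ycsharp τ t s) :
    ∀ t u s : ℝ,
      ysharp t s - ysharp t u - ysharp u s
        = ∑ τ ∈ F, X τ t u * ycsharp τ u s := by
  intro t u s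
  -- membership of left legs of the reduced coproduct
  have hleg : ∀ σ ∈ F, ∀ p ∈ copRedF σ, p.1 ∈ F := by
    intro σ hσ p hp
    obtain ⟨rest, he, hne⟩ := copF_head σ
    have hrw : copRedF σ = rest.erase (σ, ([] : List (PTree L))) := by
      rw [copRedF, he, List.erase_cons_head]
    rw [hrw] at hp
    have hpr : p ∈ rest := List.mem_of_mem_erase hp
    have hp1 : p.1 ≠ [] := hne p hpr
    have hpc : p ∈ copF σ := by rw [he]; exact List.mem_cons_of_mem _ hpr
    have hsz := size_copF σ p hpc
    have hσ' := (hF σ).1 hσ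
    exact (hF p.1).2 ⟨hp1, by omega⟩
  have ha := hy t s
  have hb := hy t u
  have hc := hy u s
  have key : (∑ τ ∈ F, X τ t u * yc τ u) + (∑ τ ∈ F, X τ u s * yc τ s)
      - (∑ τ ∈ F, X τ t s * yc τ s) = ∑ τ ∈ F, X τ t u * ycsharp τ u s := by
    have step : ∀ τ ∈ F,
        X τ t u * yc τ u + X τ u s * yc τ s - X τ t s * yc τ s
          = (X τ t u * (∑ σ ∈ F, ((copRedF σ).map fun p =>
                if p.1 = τ then X p.2 u s * yc σ s else 0).sum)
              + X τ t u * ycsharp τ u s)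
            - ((copRedF τ).map fun p => X p.1 t u * X p.2 u s).sum * yc τ s := by
      intro τ hτ
      have h1 := hX τ hτ t u s
      have h2 := hyc τ hτ u s
      linear_combination X τ t u * h2 - yc τ s * h1
    have hsum := Finset.sum_congr rfl step
    simp only [Finset.sum_add_distrib, Finset.sum_sub_distrib] at hsum
    have hz : (∑ τ ∈ F, X τ t u * (∑ σ ∈ F, ((copRedF σ).map fun p =>
          if p.1 = τ then X p.2 u s * yc σ s else 0).sum))
        = ∑ τ ∈ F, ((copRedF τ).map fun p => X p.1 t u * X p.2 u s).sum * yc τ s := by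
      simp only [Finset.mul_sum]
      rw [Finset.sum_comm]
      refine Finset.sum_congr rfl fun σ hσ => ?_
      rw [swap_sum F (fun τ => X τ t u) (fun p => X p.2 u s * yc σ s) (copRedF σ) (hleg σ hσ)]
      rw [← List.sum_map_mul_right]
      simp only [mul_assoc]
    linarith [hsum, hz]
  linarith [ha, hb, hc, key]
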